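/- Let (G,m,w,B) be a connected weighted finite graph with boundary, and let T : ℝ^Ω → ℝ^Ω be the nonnegative self-adjoint operator (Tu)(z) = (1/m_z)∑_{x∈B} w_{xz}·(∑_{y∈Ω} u(y)w_{xy})/(∑_{y∈Ω} w_{xy}), with eigenvalues s₁² ≤ s₂² ≤ ⋯ ≤ s_{|Ω|}². Then for every i = 1, 2, …, |Ω|: ν_i + s₁² ≤ λ_i ≤ ν_i + s_{|Ω|}². -/

import Mathlib

open Finset

noncomputable section

/-- The weighted graph Laplacian `Δ`. -/
def glap {V : Type*} [Fintype V] (m : V → ℝ) (w : V → V → ℝ) (u : V → ℝ) (x : V) : ℝ :=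
  (1 / m x) * ∑ y, (u y - u x) * w x y

/-- Extension by zero to the boundary. -/
def E0 {V : Type*} [DecidableEq V] (B : Finset V) (u : {x : V // x ∉ B} → ℝ) (x : V) : ℝ :=
  if h : x ∈ B then 0 else u ⟨x, h⟩

/-- The normal extension. -/
def N0 {V : Type*} [Fintype V] [DecidableEq V] (w : V → V → ℝ) (B : Finset V)
    (u : {x : V // x ∉ B} → ℝ) (x : V) : ℝ :=
  if h : x ∈ B then
    (∑ y : {x : V // x ∉ B}, u y * w x y.1) / (∑ y : {x : V // x ∉ B}, w x y.1)
  else u ⟨x, h⟩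

/-- The Dirichlet Laplacian `Δ^D`. -/
def dlap {V : Type*} [Fintype V] [DecidableEq V] (m : V → ℝ) (w : V → V → ℝ) (B : Finset V)
    (u : {x : V // x ∉ B} → ℝ) (x : {x : V // x ∉ B}) : ℝ :=
  glap m w (E0 B u) x.1

/-- The Neumann Laplacian `Δ^N`. -/
def nlap {V : Type*} [Fintype V] [DecidableEq V] (m : V → ℝ) (w : V → V → ℝ) (B : Finset V)
    (u : {x : V // x ∉ B} → ℝ) (x : {x : V // x ∉ B}) : ℝ :=
  glap m w (N0 w B u) x.1

/-- The Laplacian `Δ_Ω` of the induced interior subgraph. -/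
def olap {V : Type*} [Fintype V] [DecidableEq V] (m : V → ℝ) (w : V → V → ℝ) (B : Finset V)
    (u : {x : V // x ∉ B} → ℝ) (x : {x : V // x ∉ B}) : ℝ :=
  (1 / m x.1) * ∑ y : {x : V // x ∉ B}, (u y - u x) * w x.1 y.1

/-- The weighted boundary vertex degree `Deg_b`. -/
def degb {V : Type*} [DecidableEq V] (m : V → ℝ) (w : V → V → ℝ) (B : Finset V) (x : V) : ℝ :=
  (1 / m x) * ∑ y ∈ B, w x y

/-- The operator `T = A_B ∘ Deg⁻¹ ∘ A_Ω`. -/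
def bop {V : Type*} [Fintype V] [DecidableEq V] (m : V → ℝ) (w : V → V → ℝ) (B : Finset V)
    (u : {x : V // x ∉ B} → ℝ) (z : {x : V // x ∉ B}) : ℝ :=
  (1 / m z.1) * ∑ x ∈ B, w x z.1 *
    ((∑ y : {x : V // x ∉ B}, u y * w x y.1) / (∑ y : {x : V // x ∉ B}, w x y.1))

/-- The Bakry–Émery `Γ` operator of a Laplacian-type operator `L`. -/
def gam {W : Type*} (L : (W → ℝ) → (W → ℝ)) (f g : W → ℝ) (x : W) : ℝ :=
  (L (fun y => f y * g y) x - f x * L g x - g x * L f x) / 2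

/-- The Bakry–Émery `Γ₂` operator of a Laplacian-type operator `L`. -/
def gam2 {W : Type*} (L : (W → ℝ) → (W → ℝ)) (f : W → ℝ) (x : W) : ℝ :=
  L (gam L f f) x / 2 - gam L f (L f) x

/-- `e` is a complete list of the eigenvalues of `L` : there is a corresponding eigenbasis
which is orthonormal with respect to the inner product weighted by `m`. -/
def IsEigenBasis {n : ℕ} {W : Type*} [Fintype W] (m : W → ℝ)
    (L : (W → ℝ) → (W → ℝ)) (e : Fin n → ℝ) : Prop :=
  ∃ φ : Fin n → W → ℝ,
    (∀ i j, (∑ x, φ i x * φ j x * m x) = if i = j then 1 else 0) ∧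
    ∀ i, L (φ i) = fun x => e i * φ i x

/-!
On `Ω` the extensions `N₀u` and `E₀u` agree, and on `B` the difference `N₀u - E₀u` is the weighted
average of `u` over the interior neighbours; summing it against the boundary weights gives exactly
`Tu`, so `Δ^N - Δ^D = T`. The quadratic forms of `-Δ^D` and `-Δ^N` therefore differ by `⟨Tu, u⟩`,
which lies between `s₁² ⟨u, u⟩` and `s_{|Ω|}² ⟨u, u⟩`. By the Courant–Fischer principle an
inequality `⟨L₁ v, v⟩ ≤ ⟨L₂ v, v⟩ + C ⟨v, v⟩` between quadratic forms passes to the ordered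
eigenvalues, which yields both bounds.
-/

def wInner {W : Type*} [Fintype W] (mm : W → ℝ) (u v : W → ℝ) : ℝ := ∑ x, u x * v x * mm x

section WeightedInner

variable {W : Type*} [Fintype W] {mm : W → ℝ}

theorem wInner_comm (u v : W → ℝ) : wInner mm u v = wInner mm v u := by
  simp only [wInner, mul_comm (u _)]

theorem wInner_sub_left (u u' v : W → ℝ) :
    wInner mm (u - u') v = wInner mm u v - wInner mm u' v := by
  simp only [wInner, Pi.sub_apply, sub_mul, sum_sub_distrib]

theorem wInner_sum_smul_left {ι : Type*} [Fintype ι] (c : ι → ℝ) (φ : ι → W → ℝ) (v : W → ℝ) :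
    wInner mm (∑ j, c j • φ j) v = ∑ j, c j * wInner mm (φ j) v := by
  simp only [wInner, Finset.sum_apply, Pi.smul_apply, smul_eq_mul, sum_mul, mul_sum]
  rw [sum_comm]
  exact sum_congr rfl fun _ _ => sum_congr rfl fun _ _ => by ring

theorem wInner_self_pos (hmm : ∀ x, 0 < mm x) {v : W → ℝ} (hv : v ≠ 0) : 0 < wInner mm v v := by
  obtain ⟨x, hx⟩ := Function.ne_iff.mp hv
  exact sum_pos' (fun y _ => mul_nonneg (mul_self_nonneg _) (hmm y).le)
    ⟨x, mem_univ x, mul_pos (mul_self_pos.mpr hx) (hmm x)⟩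

def wInnerRight (mm : W → ℝ) (u : W → ℝ) : (W → ℝ) →ₗ[ℝ] ℝ where
  toFun v := wInner mm v u
  map_add' f g := by simp only [wInner, Pi.add_apply, add_mul, sum_add_distrib]
  map_smul' c f := by simp only [wInner, Pi.smul_apply, smul_eq_mul, mul_sum, mul_assoc,
    RingHom.id_apply]

@[simp]
theorem wInnerRight_apply (u v : W → ℝ) : wInnerRight mm u v = wInner mm v u := rfl

end WeightedInner

theorem exists_ne_zero_forall_eq_zero {K M ι : Type*} [Field K] [AddCommGroup M] [Module K M]
    [FiniteDimensional K M] [Fintype ι] (f : ι → M →ₗ[K] K)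
    (h : Fintype.card ι < Module.finrank K M) : ∃ v ≠ 0, ∀ j, f j v = 0 := by
  have hker := LinearMap.ker_ne_bot_of_finrank_lt (f := LinearMap.pi f) (by simpa using h)
  obtain ⟨v, hv, hv0⟩ := (Submodule.ne_bot_iff _).mp hker
  exact ⟨v, hv0, fun j => congrFun (LinearMap.mem_ker.mp hv) j⟩

section Orthonormal

variable {W ι : Type*} [Fintype W] [Fintype ι] [DecidableEq ι] {mm : W → ℝ} {φ : ι → W → ℝ}

theorem wInner_sum_smul_orthonormal
    (hφ : ∀ i j, wInner mm (φ i) (φ j) = if i = j then 1 else 0) (c : ι → ℝ) (i : ι) :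
    wInner mm (∑ j, c j • φ j) (φ i) = c i := by
  simp [wInner_sum_smul_left, hφ]

theorem linearIndependent_of_wInner_orthonormal
    (hφ : ∀ i j, wInner mm (φ i) (φ j) = if i = j then 1 else 0) : LinearIndependent ℝ φ := by
  refine Fintype.linearIndependent_iff.mpr fun c hc i => ?_
  rw [← wInner_sum_smul_orthonormal hφ c i, hc]
  simp [wInner]

theorem eq_sum_wInner_smul (hφ : ∀ i j, wInner mm (φ i) (φ j) = if i = j then 1 else 0)
    (hcard : Fintype.card ι = Fintype.card W) (v : W → ℝ) :
    v = ∑ j, wInner mm v (φ j) • φ j := by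
  have hspan := (linearIndependent_of_wInner_orthonormal hφ).span_eq_top_of_card_eq_finrank'
    (hcard.trans (Module.finrank_fintype_fun_eq_card ℝ).symm)
  obtain ⟨c, rfl⟩ :=
    (Submodule.mem_span_range_iff_exists_fun ℝ).mp (hspan ▸ Submodule.mem_top (x := v))
  simp only [wInner_sum_smul_orthonormal hφ]

end Orthonormal

section EigenBasis

variable {W ι : Type*} [Fintype W] [Fintype ι] [DecidableEq ι] {mm : W → ℝ} {φ : ι → W → ℝ}
  {L : (W → ℝ) → (W → ℝ)} {α : ι → ℝ}

theorem wInner_self_eq_sum_sq (hφ : ∀ i j, wInner mm (φ i) (φ j) = if i = j then 1 else 0)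
    (hcard : Fintype.card ι = Fintype.card W) (v : W → ℝ) :
    wInner mm v v = ∑ j, wInner mm v (φ j) ^ 2 := by
  nth_rewrite 1 [eq_sum_wInner_smul hφ hcard v]
  simp only [wInner_sum_smul_left, wInner_comm (φ _) v, sq]

theorem wInner_apply_self_eq (hφ : ∀ i j, wInner mm (φ i) (φ j) = if i = j then 1 else 0)
    (hcard : Fintype.card ι = Fintype.card W) (hL : IsLinearMap ℝ L)
    (hLφ : ∀ j, L (φ j) = fun x => α j * φ j x) (v : W → ℝ) :
    wInner mm (L v) v = ∑ j, α j * wInner mm v (φ j) ^ 2 := by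
  have hLv : L v = ∑ j, (α j * wInner mm v (φ j)) • φ j := by
    conv_lhs => rw [eq_sum_wInner_smul hφ hcard v]
    change hL.mk' L _ = _
    simp only [map_sum, map_smul, IsLinearMap.mk'_apply, hLφ]
    exact sum_congr rfl fun j _ => funext fun x => by simp only [Pi.smul_apply, smul_eq_mul]; ring
  rw [hLv, wInner_sum_smul_left]
  simp only [wInner_comm (φ _) v, sq, mul_assoc]

theorem mul_wInner_self_le_wInner_apply
    (hφ : ∀ i j, wInner mm (φ i) (φ j) = if i = j then 1 else 0)
    (hcard : Fintype.card ι = Fintype.card W) (hL : IsLinearMap ℝ L)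
    (hLφ : ∀ j, L (φ j) = fun x => α j * φ j x) {a : ℝ} {v : W → ℝ}
    (h : ∀ j, wInner mm v (φ j) ≠ 0 → a ≤ α j) : a * wInner mm v v ≤ wInner mm (L v) v := by
  rw [wInner_self_eq_sum_sq hφ hcard, wInner_apply_self_eq hφ hcard hL hLφ, mul_sum]
  refine sum_le_sum fun j _ => ?_
  by_cases hj : wInner mm v (φ j) = 0
  · simp [hj]
  · exact mul_le_mul_of_nonneg_right (h j hj) (sq_nonneg _)

theorem wInner_apply_le_mul_wInner_self
    (hφ : ∀ i j, wInner mm (φ i) (φ j) = if i = j then 1 else 0)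
    (hcard : Fintype.card ι = Fintype.card W) (hL : IsLinearMap ℝ L)
    (hLφ : ∀ j, L (φ j) = fun x => α j * φ j x) {a : ℝ} {v : W → ℝ}
    (h : ∀ j, wInner mm v (φ j) ≠ 0 → α j ≤ a) : wInner mm (L v) v ≤ a * wInner mm v v := by
  rw [wInner_self_eq_sum_sq hφ hcard, wInner_apply_self_eq hφ hcard hL hLφ, mul_sum]
  refine sum_le_sum fun j _ => ?_
  by_cases hj : wInner mm v (φ j) = 0
  · simp [hj]
  · exact mul_le_mul_of_nonneg_right (h j hj) (sq_nonneg _)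

end EigenBasis

namespace IsEigenBasis

variable {W : Type*} [Fintype W] {mm : W → ℝ} {L : (W → ℝ) → (W → ℝ)}
  {α : Fin (Fintype.card W) → ℝ}

theorem mul_wInner_self_le (h : IsEigenBasis mm L α) (hL : IsLinearMap ℝ L) (hα : Monotone α)
    (h0 : 0 < Fintype.card W) (v : W → ℝ) :
    α ⟨0, h0⟩ * wInner mm v v ≤ wInner mm (L v) v := by
  obtain ⟨φ, hφ, hLφ⟩ := h
  exact mul_wInner_self_le_wInner_apply hφ (Fintype.card_fin _) hL hLφ
    fun j _ => hα (Nat.zero_le j)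

theorem wInner_apply_le (h : IsEigenBasis mm L α) (hL : IsLinearMap ℝ L) (hα : Monotone α)
    (h0 : 0 < Fintype.card W) (v : W → ℝ) :
    wInner mm (L v) v ≤ α ⟨Fintype.card W - 1, Nat.sub_one_lt_of_lt h0⟩ * wInner mm v v := by
  obtain ⟨φ, hφ, hLφ⟩ := h
  exact wInner_apply_le_mul_wInner_self hφ (Fintype.card_fin _) hL hLφ
    fun j _ => hα (Nat.le_sub_one_of_lt j.2)

theorem le_add_of_wInner_le (hmm : ∀ x, 0 < mm x) {L₁ L₂ : (W → ℝ) → (W → ℝ)}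
    (hL₁ : IsLinearMap ℝ L₁) (hL₂ : IsLinearMap ℝ L₂) {α β : Fin (Fintype.card W) → ℝ}
    (hα : Antitone α) (hβ : Antitone β) (h₁ : IsEigenBasis mm L₁ α) (h₂ : IsEigenBasis mm L₂ β)
    {C : ℝ} (hC : ∀ v, wInner mm (L₁ v) v ≤ wInner mm (L₂ v) v + C * wInner mm v v)
    (i : Fin (Fintype.card W)) : α i ≤ β i + C := by
  obtain ⟨ψ, hψ, hLψ⟩ := h₁
  obtain ⟨φ, hφ, hLφ⟩ := h₂
  -- `n - 1` linear conditions `v ⊥ φ j` (`j < i`) and `v ⊥ ψ j` (`j > i`) leave a nonzero `v`,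
  -- whose Rayleigh quotient is then `≥ α i` for `L₁` and `≤ β i` for `L₂`.
  obtain ⟨v, hv0, hv⟩ := exists_ne_zero_forall_eq_zero
    (fun j : {j // j ≠ i} => if j.1 < i then wInnerRight mm (φ j) else wInnerRight mm (ψ j))
    (by simpa [Module.finrank_fintype_fun_eq_card] using i.pos)
  have hψv : ∀ j, wInner mm v (ψ j) ≠ 0 → j ≤ i := by
    intro j hj
    by_contra! hij
    simpa [not_lt.mpr hij.le, hj] using hv ⟨j, hij.ne'⟩
  have hφv : ∀ j, wInner mm v (φ j) ≠ 0 → i ≤ j := by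
    intro j hj
    by_contra! hij
    simpa [hij, hj] using hv ⟨j, hij.ne⟩
  have hupper := wInner_apply_le_mul_wInner_self hφ (Fintype.card_fin _) hL₂ hLφ
    fun j hj => hβ (hφv j hj)
  have := calc
    α i * wInner mm v v ≤ wInner mm (L₁ v) v :=
      mul_wInner_self_le_wInner_apply hψ (Fintype.card_fin _) hL₁ hLψ fun j hj => hα (hψv j hj)
    _ ≤ wInner mm (L₂ v) v + C * wInner mm v v := hC v
    _ ≤ (β i + C) * wInner mm v v := by linarith
  exact le_of_mul_le_mul_right this (wInner_self_pos hmm hv0)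

end IsEigenBasis

theorem glap_isLinearMap {V : Type*} [Fintype V] (m : V → ℝ) (w : V → V → ℝ) :
    IsLinearMap ℝ (glap m w) where
  map_add f g := funext fun x => by
    simp only [glap, Pi.add_apply, ← mul_add, ← sum_add_distrib, add_sub_add_comm, add_mul]
  map_smul c f := funext fun x => by
    simp only [glap, Pi.smul_apply, smul_eq_mul, ← mul_sub, mul_sum, mul_assoc, mul_left_comm c]

theorem E0_isLinearMap {V : Type*} [DecidableEq V] (B : Finset V) : IsLinearMap ℝ (E0 B) where
  map_add u v := funext fun x => by by_cases hx : x ∈ B <;> simp [E0, hx]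
  map_smul c u := funext fun x => by by_cases hx : x ∈ B <;> simp [E0, hx]

section Laplacians

variable {V : Type*} [Fintype V] [DecidableEq V] (m : V → ℝ) (w : V → V → ℝ) (B : Finset V)

theorem N0_isLinearMap : IsLinearMap ℝ (N0 w B) where
  map_add u v := funext fun x => by
    by_cases hx : x ∈ B <;> simp [N0, hx, add_mul, sum_add_distrib, add_div]
  map_smul c u := funext fun x => by
    by_cases hx : x ∈ B <;> simp [N0, hx, mul_assoc, ← mul_sum, mul_div_assoc]

theorem dlap_isLinearMap : IsLinearMap ℝ (dlap m w B) :=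
  (LinearMap.funLeft ℝ ℝ Subtype.val ∘ₗ (glap_isLinearMap m w).mk' _ ∘ₗ
    (E0_isLinearMap B).mk' _).isLinear

theorem nlap_isLinearMap : IsLinearMap ℝ (nlap m w B) :=
  (LinearMap.funLeft ℝ ℝ Subtype.val ∘ₗ (glap_isLinearMap m w).mk' _ ∘ₗ
    (N0_isLinearMap w B).mk' _).isLinear

theorem nlap_sub_dlap (hwsymm : ∀ x y, w x y = w y x) :
    nlap m w B - dlap m w B = bop m w B := by
  funext u x
  have hx : N0 w B u x.1 = E0 B u x.1 := by simp [N0, E0, x.2]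
  have hdiff : ∀ y, N0 w B u y - E0 B u y = if y ∈ B then
      (∑ z : {x : V // x ∉ B}, u z * w y z.1) / (∑ z : {x : V // x ∉ B}, w y z.1) else 0 := by
    intro y; unfold N0 E0; split_ifs <;> simp
  simp only [Pi.sub_apply, nlap, dlap, glap, hx, ← mul_sub, ← sum_sub_distrib,
    sub_sub_sub_cancel_right, ← sub_mul, hdiff, ite_mul, zero_mul, sum_ite_mem, univ_inter, bop,
    hwsymm x.1]
  exact congrArg _ (sum_congr rfl fun _ _ => mul_comm _ _)

theorem bop_isLinearMap (hwsymm : ∀ x y, w x y = w y x) : IsLinearMap ℝ (bop m w B) := by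
  rw [← nlap_sub_dlap m w B hwsymm]
  exact ((nlap_isLinearMap m w B).mk' _ - (dlap_isLinearMap m w B).mk' _).isLinear

end Laplacians

theorem stmt_10 {V : Type*} [Fintype V] [DecidableEq V]
    (G : SimpleGraph V)
    (m : V → ℝ) (hm : ∀ x, 0 < m x)
    (w : V → V → ℝ) (hwsymm : ∀ x y, w x y = w y x)
    (B : Finset V) (hB : B.Nonempty)
    (hBint : ∀ x ∈ B, ∃ y, y ∉ B ∧ G.Adj x y)
    (ν : Fin (Fintype.card {x : V // x ∉ B}) → ℝ) (hνmono : Monotone ν)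
    (hν : IsEigenBasis (fun x : {x : V // x ∉ B} => m x.1) (nlap m w B) (fun i => -(ν i)))
    (lam : Fin (Fintype.card {x : V // x ∉ B}) → ℝ) (hlammono : Monotone lam)
    (hlam : IsEigenBasis (fun x : {x : V // x ∉ B} => m x.1) (dlap m w B) (fun i => -(lam i)))
    (sq : Fin (Fintype.card {x : V // x ∉ B}) → ℝ) (hsqmono : Monotone sq)
    (hsq : IsEigenBasis (fun x : {x : V // x ∉ B} => m x.1) (bop m w B) sq)
    :
    ∀ i : Fin (Fintype.card {x : V // x ∉ B}),
      ν i + sq ⟨0, (by obtain ⟨x0, hx0⟩ := hB; obtain ⟨y0, hy0, -⟩ := hBint x0 hx0; exact Fintype.card_pos_iff.mpr ⟨⟨y0, hy0⟩⟩)⟩ ≤ lam i ∧ lam i ≤ ν i + sq ⟨Fintype.card {x : V // x ∉ B} - 1, (by obtain ⟨x0, hx0⟩ := hB; obtain ⟨y0, hy0, -⟩ := hBint x0 hx0; have h0 : 0 < Fintype.card {x : V // x ∉ B} := Fintype.card_pos_iff.mpr ⟨⟨y0, hy0⟩⟩; omega)⟩ := by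
  intro i
  have hmm : ∀ x : {x : V // x ∉ B}, 0 < m x.1 := fun x => hm x.1
  have hD := dlap_isLinearMap m w B
  have hN := nlap_isLinearMap m w B
  have hsplit : ∀ v, wInner (fun x : {x : V // x ∉ B} => m x.1) (bop m w B v) v =
      wInner _ (nlap m w B v) v - wInner _ (dlap m w B v) v := fun v => by
    rw [← nlap_sub_dlap m w B hwsymm, Pi.sub_apply, wInner_sub_left]
  have hTmin := hsq.mul_wInner_self_le (bop_isLinearMap m w B hwsymm) hsqmono i.pos
  have hTmax := hsq.wInner_apply_le (bop_isLinearMap m w B hwsymm) hsqmono i.pos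
  constructor
  · have := hlam.le_add_of_wInner_le hmm hD hN hlammono.neg hνmono.neg hν
      (C := -sq ⟨0, i.pos⟩) (fun v => by linarith [hsplit v, hTmin v]) i
    linarith
  · have := hν.le_add_of_wInner_le hmm hN hD hνmono.neg hlammono.neg hlam
      (C := sq ⟨_, Nat.sub_one_lt_of_lt i.pos⟩) (fun v => by linarith [hsplit v, hTmax v]) i
    linarith
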